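/- For n > 1 and m ≥ 1, let G be obtained from the odd cycle C_{2n+1} with vertices u_1,…,u_{2n+1} by replacing each odd-indexed vertex u_1, u_3, …, u_{2n−1} with a clique K_m (each clique's vertices adjacent to all neighbors of the replaced vertex). Then G is K_{1,3}-free and ((K_2 ∪ K_1) + K_2)-free, ω(G) = m + 1, Δ(G) = 2m = 2ω(G) − 2, and χ(G) = m + 2 = ω(G) + 1. -/

import Mathlib

open SimpleGraph

/-- The claw `K_{1,3}`. -/
def claw : SimpleGraph (Fin 1 ⊕ Fin 3) := completeBipartiteGraph (Fin 1) (Fin 3)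

/-- The graph `(K_2 ∪ K_1) + K_2`: vertices `3,4` are adjacent to everything,
`0,1` are adjacent, and `2` is adjacent only to `3,4`. -/
def kkJoin : SimpleGraph (Fin 5) := SimpleGraph.fromEdgeSet
  {s(0,1), s(3,4), s(0,3), s(0,4), s(1,3), s(1,4), s(2,3), s(2,4)}

/-- `G` has no induced subgraph isomorphic to `H`. -/
def Free {W V : Type*} (H : SimpleGraph W) (G : SimpleGraph V) : Prop := IsEmpty (H ↪g G)

noncomputable def maxDeg {V : Type*} [Fintype V] (G : SimpleGraph V) : ℕ := by
  classical exact G.maxDegree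

noncomputable def deg {V : Type*} [Fintype V] (G : SimpleGraph V) (v : V) : ℕ := by
  classical exact G.degree v

/-- A graph is a path graph. -/
def IsPathGraph {V : Type*} (G : SimpleGraph V) : Prop := ∃ n, Nonempty (G ≃g pathGraph n)

/-- A graph is a cycle graph. -/
def IsCycleGraph {V : Type*} (G : SimpleGraph V) : Prop :=
  ∃ n, 3 ≤ n ∧ Nonempty (G ≃g cycleGraph n)

/-- The graph obtained from the cycle `C_{2n+1}` with vertices `u_1, …, u_{2n+1}`
(here indexed by `i : Fin (2n+1)` representing `u_{i+1}`) by replacing each odd-indexed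
vertex `u_1, u_3, …, u_{2n-1}` by a clique `K_m`: a vertex is a pair `⟨i, a⟩` where `a`
ranges over the `m` copies (or the single copy); two vertices are adjacent iff they are
distinct copies at the same cycle position, or lie at consecutive cycle positions. -/
def cycleBlowup (n m : ℕ) :
    SimpleGraph (Σ i : Fin (2 * n + 1), Fin (if i.val % 2 = 0 ∧ i.val < 2 * n then m else 1)) :=
  SimpleGraph.fromRel (fun x y => x.1 = y.1 ∨ y.1.val = (x.1.val + 1) % (2 * n + 1))

/-
The graph is the clique blow-up `C_{2n+1}[w]` of the odd cycle with weights `w = m` on the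
positions `0, 2, …, 2n-2` and `w = 1` elsewhere; no two heavy positions are adjacent.
Vertices in a common fibre are true twins, so an induced claw projects injectively to a claw
in the cycle, which has maximum degree 2. Since `C_{2n+1}` is triangle-free for `n > 1`, every
triangle of the blow-up has two vertices in one fibre; in an induced `(K_2 ∪ K_1) + K_2` this
forces the two `K_2`'s into two adjacent fibres of size at least 2, which do not exist. For the
same reason a clique lives over an edge of the cycle, giving `ω = m + 1`, and a vertex of weight
one between two heavy positions has the maximal degree `2m`. An independent set projects
injectively to an independent set of `C_{2n+1}`, so it has at most `n` vertices, while the graph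
has `n(m+1) + 1` vertices: hence `χ > m + 1`, and an explicit colouring uses `m + 2` colours.
-/

open Finset

lemma Fin.eq_add_one_iff_val {k : ℕ} [NeZero k] (hk : 1 < k) {u v : Fin k} :
    v = u + 1 ↔ v.val = u.val + 1 ∨ (u.val + 1 = k ∧ v.val = 0) := by
  rw [Fin.ext_iff, Fin.val_add, Fin.val_one', Nat.mod_eq_of_lt hk]
  rcases (show u.val + 1 ≤ k from u.isLt).lt_or_eq with h | h
  · rw [Nat.mod_eq_of_lt h]; omega
  · rw [h, Nat.mod_self]; omega

namespace SimpleGraph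

variable {α W : Type*}

def AreTrueTwins (G : SimpleGraph W) (v v' : W) : Prop :=
  G.Adj v v' ∧ ∀ z, z ≠ v → z ≠ v' → (G.Adj v z ↔ G.Adj v' z)

instance [DecidableEq W] [Fintype W] (G : SimpleGraph W) [DecidableRel G.Adj] :
    DecidableRel G.AreTrueTwins := fun _ _ => by unfold AreTrueTwins; infer_instance

lemma Colorable.card_le_mul_indepNum {V : Type*} [Fintype V] {G : SimpleGraph V}
    {k : ℕ} (hG : G.Colorable k) : Fintype.card V ≤ k * G.indepNum := by
  classical
  obtain ⟨C⟩ := hG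
  calc Fintype.card V = ∑ c : Fin k, #{v | C v = c} := by
        rw [← card_univ, card_eq_sum_card_fiberwise fun v _ => mem_univ (C v)]
    _ ≤ ∑ _c : Fin k, G.indepNum := sum_le_sum fun c _ => by
        refine IsIndepSet.card_le_indepNum fun u hu v hv _ => ?_
        simp only [coe_filter, mem_univ, true_and, Set.mem_ofPred_eq] at hu hv
        exact fun h => C.valid h (hu.trans hv.symm)
    _ = k * G.indepNum := by simp

section CliqueBlowup

variable {H : SimpleGraph α} {w : α → ℕ}

def cliqueBlowup (H : SimpleGraph α) (w : α → ℕ) : SimpleGraph (Σ a, Fin (w a)) where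
  Adj x y := x ≠ y ∧ (x.1 = y.1 ∨ H.Adj x.1 y.1)
  symm := ⟨fun _ _ h => ⟨h.1.symm, h.2.imp Eq.symm Adj.symm⟩⟩
  loopless := ⟨fun _ h => h.1 rfl⟩

@[simp]
lemma cliqueBlowup_adj {x y : Σ a, Fin (w a)} :
    (H.cliqueBlowup w).Adj x y ↔ x ≠ y ∧ (x.1 = y.1 ∨ H.Adj x.1 y.1) := Iff.rfl

lemma cliqueBlowup_adj_of_fst_ne {x y : Σ a, Fin (w a)} (h : x.1 ≠ y.1) :
    (H.cliqueBlowup w).Adj x y ↔ H.Adj x.1 y.1 := by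
  simp only [cliqueBlowup_adj, h, false_or, and_iff_right_iff_imp]
  exact fun _ hxy => h (congrArg Sigma.fst hxy)

lemma val_snd_ne_of_fst_eq {x y : Σ a, Fin (w a)} (hne : x ≠ y) (h : x.1 = y.1) :
    (x.2 : ℕ) ≠ y.2 := by
  obtain ⟨a, i⟩ := x
  obtain ⟨b, j⟩ := y
  obtain rfl : a = b := h
  exact fun hij => hne (Sigma.ext rfl (heq_of_eq (Fin.ext hij)))

lemma two_le_of_fst_eq {x y : Σ a, Fin (w a)} (hne : x ≠ y) (h : x.1 = y.1) : 2 ≤ w x.1 := by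
  have hij := val_snd_ne_of_fst_eq hne h
  obtain ⟨a, i⟩ := x
  obtain ⟨b, j⟩ := y
  obtain rfl : a = b := h
  have := i.isLt
  have := j.isLt
  dsimp only at hij ⊢
  omega

namespace Embedding

variable {G : SimpleGraph W} (e : G ↪g H.cliqueBlowup w)

lemma areTrueTwins_of_fst_eq {v v' : W} (hne : v ≠ v') (h : (e v).1 = (e v').1) :
    G.AreTrueTwins v v' := by
  refine ⟨e.map_rel_iff.mp ⟨e.injective.ne hne, Or.inl h⟩, fun z hzv hzv' => ?_⟩
  rw [← e.map_rel_iff, ← e.map_rel_iff, cliqueBlowup_adj, cliqueBlowup_adj, h,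
    e.injective.ne_iff, e.injective.ne_iff]
  simp [Ne.symm hzv, Ne.symm hzv']

def ofInjectiveFst (he : Function.Injective fun v => (e v).1) : G ↪g H where
  toFun v := (e v).1
  inj' := he
  map_rel_iff' {v v'} := by
    obtain rfl | hne := eq_or_ne v v'
    · simp
    · rw [← e.map_rel_iff, cliqueBlowup_adj_of_fst_ne (he.ne hne)]
      rfl

end Embedding

theorem free_cliqueBlowup {G : SimpleGraph W} (hH : _root_.Free G H)
    (hG : ∀ v v', v ≠ v' → ¬G.AreTrueTwins v v') : _root_.Free G (H.cliqueBlowup w) :=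
  ⟨fun e => hH.false (e.ofInjectiveFst fun v v' h => by
    by_contra hne
    exact hG v v' hne (e.areTrueTwins_of_fst_eq hne h))⟩

lemma fst_eq_or_of_cliqueFree_three (hH : H.CliqueFree 3) {x y z : Σ a, Fin (w a)}
    (hxy : (H.cliqueBlowup w).Adj x y) (hxz : (H.cliqueBlowup w).Adj x z)
    (hyz : (H.cliqueBlowup w).Adj y z) : x.1 = y.1 ∨ x.1 = z.1 ∨ y.1 = z.1 := by
  classical
  by_contra! h
  obtain ⟨h₁, h₂, h₃⟩ := h
  rw [cliqueBlowup_adj_of_fst_ne h₁] at hxy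
  rw [cliqueBlowup_adj_of_fst_ne h₂] at hxz
  rw [cliqueBlowup_adj_of_fst_ne h₃] at hyz
  exact hH _ (is3Clique_triple_iff.mpr ⟨hxy, hxz, hyz⟩)

lemma card_le_sum_of_forall_fst_mem {s : Finset (Σ a, Fin (w a))} {t : Finset α}
    (h : ∀ x ∈ s, x.1 ∈ t) : #s ≤ ∑ a ∈ t, w a := by
  calc #s ≤ #(t.sigma fun _ => univ) := card_le_card fun x hx => mem_sigma.mpr ⟨h x hx, mem_univ _⟩
    _ = ∑ a ∈ t, w a := by simp [card_sigma]

lemma card_le_of_isClique_cliqueBlowup (hH : H.CliqueFree 3) {k : ℕ} (hw : ∀ a, w a ≤ k)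
    (hw₂ : ∀ a b, H.Adj a b → w a + w b ≤ k) {s : Finset (Σ a, Fin (w a))}
    (hs : (H.cliqueBlowup w).IsClique s) : #s ≤ k := by
  classical
  obtain rfl | ⟨x, hx⟩ := s.eq_empty_or_nonempty
  · simp
  by_cases hfib : ∀ y ∈ s, y.1 = x.1
  · calc #s ≤ ∑ a ∈ {x.1}, w a := card_le_sum_of_forall_fst_mem fun y hy => by simp [hfib y hy]
      _ ≤ k := by simpa using hw x.1
  push Not at hfib
  obtain ⟨y, hy, hyx⟩ := hfib
  have hxy : (H.cliqueBlowup w).Adj x y := hs hx hy (by rintro rfl; exact hyx rfl)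
  have hpair : ∀ z ∈ s, z.1 ∈ ({x.1, y.1} : Finset α) := by
    intro z hz
    by_cases hzx : z = x
    · simp [hzx]
    by_cases hzy : z = y
    · simp [hzy]
    rcases fst_eq_or_of_cliqueFree_three hH hxy (hs hx hz (Ne.symm hzx)) (hs hy hz (Ne.symm hzy))
      with h | h | h
    · exact absurd h.symm hyx
    · simp [h]
    · simp [h]
  calc #s ≤ ∑ a ∈ {x.1, y.1}, w a := card_le_sum_of_forall_fst_mem hpair
    _ = w x.1 + w y.1 := sum_pair (Ne.symm hyx)
    _ ≤ k := hw₂ _ _ ((cliqueBlowup_adj_of_fst_ne (Ne.symm hyx)).mp hxy)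

lemma isNClique_cliqueBlowup_sigma_pair [DecidableEq α] {a b : α} (hab : H.Adj a b) :
    (H.cliqueBlowup w).IsNClique (w a + w b) (({a, b} : Finset α).sigma fun _ => univ) := by
  refine ⟨fun x hx y hy hxy => ⟨hxy, ?_⟩, ?_⟩
  · simp only [coe_sigma, Set.mem_sigma_iff, coe_insert, coe_singleton, Set.mem_insert_iff,
      Set.mem_singleton_iff] at hx hy
    rcases hx.1 with hx | hx <;> rcases hy.1 with hy | hy <;> simp [hx, hy, hab, hab.symm]
  · simp [card_sigma, sum_pair hab.ne]

lemma indepNum_cliqueBlowup_le [Finite α] : (H.cliqueBlowup w).indepNum ≤ H.indepNum := by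
  classical
  obtain ⟨s, hs⟩ := (H.cliqueBlowup w).exists_isNIndepSet_indepNum
  have hinj : Set.InjOn Sigma.fst (s : Set (Σ a, Fin (w a))) := fun x hx y hy h => by
    by_contra hne
    exact hs.isIndepSet hx hy hne ⟨hne, Or.inl h⟩
  have hind : H.IsIndepSet (s.image Sigma.fst) := by
    rintro _ ha _ hb hab hadj
    obtain ⟨x, hx, rfl⟩ := mem_image.mp ha
    obtain ⟨y, hy, rfl⟩ := mem_image.mp hb
    exact hs.isIndepSet hx hy (fun h => hab (congrArg Sigma.fst h))
      ((cliqueBlowup_adj_of_fst_ne hab).mpr hadj)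
  rw [← hs.card_eq, ← card_image_of_injOn hinj]
  exact hind.card_le_indepNum

instance [DecidableEq α] [DecidableRel H.Adj] : DecidableRel (H.cliqueBlowup w).Adj :=
  fun _ _ => inferInstanceAs (Decidable (_ ∧ _))

variable [Fintype α] [DecidableEq α] [DecidableRel H.Adj]

lemma degree_cliqueBlowup (x : Σ a, Fin (w a)) :
    (H.cliqueBlowup w).degree x = w x.1 - 1 + ∑ b ∈ H.neighborFinset x.1, w b := by
  have hsplit : (H.cliqueBlowup w).neighborFinset x =
      (({x.1} : Finset α).sigma (fun _ => univ)).erase x ∪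
        (H.neighborFinset x.1).sigma fun _ => univ := by
    ext y
    simp only [mem_neighborFinset, cliqueBlowup_adj, mem_union, mem_erase, mem_sigma,
      mem_singleton, mem_univ, and_true]
    constructor
    · rintro ⟨hne, h | h⟩
      · exact Or.inl ⟨Ne.symm hne, h.symm⟩
      · exact Or.inr h
    · rintro (⟨hne, h⟩ | h)
      · exact ⟨Ne.symm hne, Or.inl h.symm⟩
      · exact ⟨fun hxy => h.ne (congrArg Sigma.fst hxy), Or.inr h⟩
  have hdisj : Disjoint ((({x.1} : Finset α).sigma (fun _ => univ)).erase x)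
      ((H.neighborFinset x.1).sigma fun _ => univ) := by
    rw [Finset.disjoint_left]
    intro y hy hy'
    simp only [mem_erase, mem_sigma, mem_singleton, mem_neighborFinset] at hy hy'
    exact hy'.1.ne (hy.2.1.symm)
  rw [← card_neighborFinset_eq_degree, hsplit, card_union_of_disjoint hdisj,
    card_erase_of_mem (by simp), card_sigma, card_sigma]
  simp

lemma degree_cliqueBlowup_le (x : Σ a, Fin (w a)) {c : ℕ} (hc : ∀ b, H.Adj x.1 b → w b ≤ c) :
    (H.cliqueBlowup w).degree x ≤ w x.1 - 1 + H.degree x.1 * c := by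
  rw [degree_cliqueBlowup, ← card_neighborFinset_eq_degree, ← smul_eq_mul]
  gcongr
  exact sum_le_card_nsmul _ _ _ fun b hb => hc b ((mem_neighborFinset _ _ _).mp hb)

end CliqueBlowup

lemma cycleGraph_adj_iff_eq_add_one {k : ℕ} [NeZero k] (hk : 1 < k) {u v : Fin k} :
    (cycleGraph k).Adj u v ↔ v = u + 1 ∨ u = v + 1 := by
  have h1 : ((1 : Fin k) : ℕ) = 1 := by rw [Fin.val_one', Nat.mod_eq_of_lt hk]
  rw [cycleGraph_adj', ← h1, ← Fin.ext_iff, ← Fin.ext_iff, sub_eq_iff_eq_add, sub_eq_iff_eq_add,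
    add_comm u, add_comm v]
  tauto

lemma cycleGraph_adj_iff_val {k : ℕ} [NeZero k] (hk : 1 < k) {u v : Fin k} :
    (cycleGraph k).Adj u v ↔ v.val = u.val + 1 ∨ u.val = v.val + 1 ∨
      (u.val + 1 = k ∧ v.val = 0) ∨ (v.val + 1 = k ∧ u.val = 0) := by
  rw [cycleGraph_adj_iff_eq_add_one hk, Fin.eq_add_one_iff_val hk, Fin.eq_add_one_iff_val hk]
  tauto

lemma cycleGraph_cliqueFree_three {k : ℕ} [NeZero k] (hk : 3 < k) :
    (cycleGraph k).CliqueFree 3 := by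
  intro s hs
  obtain ⟨a, b, c, hab, hac, hbc, rfl⟩ := card_eq_three.mp hs.card_eq
  obtain ⟨h1, h2, h3⟩ := is3Clique_triple_iff.mp hs
  rw [cycleGraph_adj_iff_val (by omega)] at h1 h2 h3
  rw [Ne, Fin.ext_iff] at hab hac hbc
  omega

lemma cycleGraph_degree_le_two {k : ℕ} (v : Fin k) : (cycleGraph k).degree v ≤ 2 := by
  match k, v with
  | 0, v => exact v.elim0
  | 1, v => exact ((cycleGraph 1).degree_lt_card_verts v).le.trans (by simp)
  | k + 2, v => exact cycleGraph_degree_two_le (v := v) ▸ card_le_two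

lemma two_mul_indepNum_cycleGraph_le {k : ℕ} [NeZero k] (hk : 1 < k) :
    2 * (cycleGraph k).indepNum ≤ k := by
  obtain ⟨s, hs⟩ := (cycleGraph k).exists_isNIndepSet_indepNum
  have hdisj : Disjoint s (s.map (addRightEmbedding 1)) := by
    rw [Finset.disjoint_left]
    intro v hv hv'
    obtain ⟨u, hu, rfl⟩ := mem_map.mp hv'
    have hadj : (cycleGraph k).Adj u (u + 1) := (cycleGraph_adj_iff_eq_add_one hk).mpr (Or.inl rfl)
    exact hs.isIndepSet hu hv hadj.ne hadj
  calc 2 * (cycleGraph k).indepNum = #(s ∪ s.map (addRightEmbedding 1)) := by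
        rw [card_union_of_disjoint hdisj, card_map, hs.card_eq]; ring
    _ ≤ k := (card_le_univ _).trans_eq (Fintype.card_fin k)

end SimpleGraph

instance : DecidableRel claw.Adj := by unfold claw completeBipartiteGraph; infer_instance

instance : DecidableRel kkJoin.Adj := by unfold kkJoin; infer_instance

theorem free_claw_of_degree_le_two {V : Type*} [Fintype V] {G : SimpleGraph V}
    [DecidableRel G.Adj] (h : ∀ v, G.degree v ≤ 2) : _root_.Free claw G := by
  refine ⟨fun e => ?_⟩
  have hsub : (univ : Finset (Fin 3)).map ⟨fun i => e (.inr i), fun i j hij =>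
      Sum.inr_injective (e.injective hij)⟩ ⊆ G.neighborFinset (e (.inl 0)) := by
    intro v hv
    obtain ⟨i, -, rfl⟩ := mem_map.mp hv
    exact (mem_neighborFinset _ _ _).mpr (e.map_rel_iff.mpr (by simp [claw]))
  have := (card_le_card hsub).trans (h (e (.inl 0)))
  simp at this

theorem free_kkJoin_cliqueBlowup {α : Type*} {H : SimpleGraph α} {w : α → ℕ}
    (hH : H.CliqueFree 3) (hw : ∀ a b, H.Adj a b → w a ≤ 1 ∨ w b ≤ 1) :
    _root_.Free kkJoin (H.cliqueBlowup w) := by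
  refine ⟨fun e => ?_⟩
  have hadj : ∀ i j, kkJoin.Adj i j → (H.cliqueBlowup w).Adj (e i) (e j) :=
    fun i j h => e.map_rel_iff.mpr h
  have htri : ∀ i j k, kkJoin.Adj i j → kkJoin.Adj i k → kkJoin.Adj j k →
      (e i).1 = (e j).1 ∨ (e i).1 = (e k).1 ∨ (e j).1 = (e k).1 := fun i j k hij hik hjk =>
    fst_eq_or_of_cliqueFree_three hH (hadj _ _ hij) (hadj _ _ hik) (hadj _ _ hjk)
  have hsep : ∀ i j, i ≠ j → ¬kkJoin.AreTrueTwins i j → (e i).1 ≠ (e j).1 :=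
    fun i j hij hnt h => hnt (e.areTrueTwins_of_fst_eq hij h)
  have h03 := hsep 0 3 (by decide) (by decide)
  -- In the triangles `013` and `034` the only pairs of true twins are `01` and `34`.
  have h01 : (e 0).1 = (e 1).1 := by
    rcases htri 0 1 3 (by decide) (by decide) (by decide) with h | h | h
    · exact h
    · exact absurd h h03
    · exact absurd h (hsep 1 3 (by decide) (by decide))
  have h34 : (e 3).1 = (e 4).1 := by
    rcases htri 0 3 4 (by decide) (by decide) (by decide) with h | h | h
    · exact absurd h h03
    · exact absurd h (hsep 0 4 (by decide) (by decide))
    · exact h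
  have hw0 := two_le_of_fst_eq (e.injective.ne (by decide : (0 : Fin 5) ≠ 1)) h01
  have hw3 := two_le_of_fst_eq (e.injective.ne (by decide : (3 : Fin 5) ≠ 4)) h34
  have := hw _ _ ((cliqueBlowup_adj_of_fst_ne h03).mp (hadj 0 3 (by decide)))
  omega

-- An `abbrev`, so that `Σ i, Fin (cycleWeight n m i)` is the vertex type of `cycleBlowup n m`
-- up to reducible unfolding and `cycleBlowup_eq` can be used for rewriting.
abbrev cycleWeight (n m : ℕ) (i : Fin (2 * n + 1)) : ℕ :=
  if i.val % 2 = 0 ∧ i.val < 2 * n then m else 1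

lemma cycleBlowup_eq {n : ℕ} (hn : 0 < n) (m : ℕ) :
    cycleBlowup n m = (cycleGraph (2 * n + 1)).cliqueBlowup (cycleWeight n m) := by
  ext x y
  have hval : ∀ u v : Fin (2 * n + 1), v.val = (u.val + 1) % (2 * n + 1) ↔ v = u + 1 := by
    intro u v
    rw [Fin.ext_iff, Fin.val_add, Fin.val_one', Nat.add_mod_mod]
  rw [cycleBlowup, fromRel_adj, cliqueBlowup_adj, cycleGraph_adj_iff_eq_add_one (by omega),
    hval, hval]
  constructor
  · rintro ⟨hne, (h | h) | (h | h)⟩ <;> tauto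
  · rintro ⟨hne, h | h | h⟩ <;> tauto

lemma cycleWeight_le_one_or {n m : ℕ} (hn : 0 < n) {a b : Fin (2 * n + 1)}
    (hab : (cycleGraph (2 * n + 1)).Adj a b) : cycleWeight n m a ≤ 1 ∨ cycleWeight n m b ≤ 1 := by
  rw [cycleGraph_adj_iff_val (by omega)] at hab
  unfold cycleWeight
  split_ifs <;> omega

lemma cycleWeight_le {n m : ℕ} (hm : 1 ≤ m) (a : Fin (2 * n + 1)) : cycleWeight n m a ≤ m := by
  unfold cycleWeight
  split_ifs <;> omega

lemma sum_range_two_mul_ite_even (m k : ℕ) :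
    ∑ i ∈ range (2 * k), (if i % 2 = 0 then m else 1) = k * (m + 1) := by
  induction k with
  | zero => simp
  | succ k ih =>
    rw [show 2 * (k + 1) = 2 * k + 1 + 1 by ring, sum_range_succ, sum_range_succ, ih,
      if_pos (by omega), if_neg (by omega)]
    ring

lemma card_sigma_cycleWeight (n m : ℕ) :
    Fintype.card (Σ i, Fin (cycleWeight n m i)) = n * m + n + 1 := by
  rw [Fintype.card_sigma]
  simp only [Fintype.card_fin]
  rw [Fin.sum_univ_eq_sum_range (fun i => if i % 2 = 0 ∧ i < 2 * n then m else 1), sum_range_succ,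
    if_neg (by omega)]
  have hlt : ∀ i ∈ range (2 * n), (if i % 2 = 0 ∧ i < 2 * n then m else 1) =
      if i % 2 = 0 then m else 1 := fun i hi => by simp [mem_range.mp hi]
  rw [sum_congr rfl hlt, sum_range_two_mul_ite_even]
  ring

lemma val_snd_cycleWeight {n m : ℕ} (x : Σ i, Fin (cycleWeight n m i)) :
    (x.1.val % 2 = 0 ∧ x.1.val < 2 * n ∧ x.2.val < m) ∨
      (¬(x.1.val % 2 = 0 ∧ x.1.val < 2 * n) ∧ x.2.val = 0) := by
  obtain ⟨a, i⟩ := x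
  have hi := i.isLt
  dsimp only at hi ⊢
  generalize (i : ℕ) = k at hi ⊢
  unfold cycleWeight at hi
  split_ifs at hi <;> omega

lemma colorable_cliqueBlowup_cycleWeight {n : ℕ} (hn : 0 < n) (m : ℕ) :
    ((cycleGraph (2 * n + 1)).cliqueBlowup (cycleWeight n m)).Colorable (m + 2) := by
  rw [colorable_iff_exists_bdd_nat_coloring]
  refine ⟨Coloring.mk
    (fun x => if x.1.val = 2 * n then m + 1 else if x.1.val % 2 = 0 then x.2.val else m) ?_,
    fun x => ?_⟩
  · intro x y hxy hc
    obtain ⟨hne, hpos⟩ := cliqueBlowup_adj.mp hxy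
    have hx := val_snd_cycleWeight x
    have hy := val_snd_cycleWeight y
    by_cases h : x.1 = y.1
    · have hsnd := val_snd_ne_of_fst_eq hne h
      rw [Fin.ext_iff] at h
      split_ifs at hc <;> omega
    · rw [cycleGraph_adj_iff_val (by omega)] at hpos
      rw [Fin.ext_iff] at h
      split_ifs at hc <;> omega
  · have hx := val_snd_cycleWeight x
    simp only [Coloring.mk, RelHom.coeFn_mk]
    split_ifs <;> omega

theorem free_claw_cycleBlowup {n : ℕ} (hn : 0 < n) (m : ℕ) :
    _root_.Free claw (cycleBlowup n m) := by
  rw [cycleBlowup_eq hn]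
  exact free_cliqueBlowup (free_claw_of_degree_le_two cycleGraph_degree_le_two) (by decide)

theorem free_kkJoin_cycleBlowup {n : ℕ} (hn : 1 < n) (m : ℕ) :
    _root_.Free kkJoin (cycleBlowup n m) := by
  rw [cycleBlowup_eq (by omega)]
  exact free_kkJoin_cliqueBlowup (cycleGraph_cliqueFree_three (by omega))
    fun _ _ => cycleWeight_le_one_or (by omega)

theorem cliqueNum_cycleBlowup {n m : ℕ} (hn : 1 < n) (hm : 1 ≤ m) :
    (cycleBlowup n m).cliqueNum = m + 1 := by
  rw [cycleBlowup_eq (by omega)]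
  apply le_antisymm
  · obtain ⟨s, hs⟩ := exists_isNClique_cliqueNum
      (G := (cycleGraph (2 * n + 1)).cliqueBlowup (cycleWeight n m))
    rw [← hs.card_eq]
    refine card_le_of_isClique_cliqueBlowup (cycleGraph_cliqueFree_three (by omega))
      (fun a => (cycleWeight_le hm a).trans (Nat.le_succ m)) (fun a b hab => ?_) hs.isClique
    have := cycleWeight_le hm a
    have := cycleWeight_le hm b
    have := cycleWeight_le_one_or (m := m) (by omega) hab
    omega
  · have hadj : (cycleGraph (2 * n + 1)).Adj ⟨0, by omega⟩ ⟨1, by omega⟩ := by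
      rw [cycleGraph_adj_iff_val (by omega)]
      simp
    have hs := isNClique_cliqueBlowup_sigma_pair (w := cycleWeight n m) hadj
    have hw : cycleWeight n m ⟨0, by omega⟩ + cycleWeight n m ⟨1, by omega⟩ = m + 1 := by
      simp [cycleWeight]
      omega
    rw [hw] at hs
    exact hs.card_eq ▸ hs.isClique.card_le_cliqueNum

lemma maxDegree_cliqueBlowup_cycleWeight {n m : ℕ} (hn : 1 < n) (hm : 1 ≤ m) :
    ((cycleGraph (2 * n + 1)).cliqueBlowup (cycleWeight n m)).maxDegree = 2 * m := by
  apply le_antisymm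
  · refine maxDegree_le_of_forall_degree_le _ _ fun x => ?_
    have hdeg := cycleGraph_degree_le_two x.1
    have hwx := cycleWeight_le hm x.1
    by_cases hx : cycleWeight n m x.1 ≤ 1
    · have := degree_cliqueBlowup_le (H := cycleGraph (2 * n + 1)) x fun b _ => cycleWeight_le hm b
      have := Nat.mul_le_mul_right m hdeg
      omega
    · have := degree_cliqueBlowup_le (H := cycleGraph (2 * n + 1)) x fun b hb =>
        (cycleWeight_le_one_or (by omega) hb).resolve_left hx
      omega
  · let v : Σ i, Fin (cycleWeight n m i) := ⟨⟨1, by omega⟩, ⟨0, by simp [cycleWeight]⟩⟩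
    have hnbr : (cycleGraph (2 * n + 1)).neighborFinset v.1 = {⟨0, by omega⟩, ⟨2, by omega⟩} := by
      ext b
      rw [mem_neighborFinset, cycleGraph_adj_iff_val (by omega), mem_insert, mem_singleton,
        Fin.ext_iff, Fin.ext_iff]
      simp only [v]
      omega
    calc 2 * m = ((cycleGraph (2 * n + 1)).cliqueBlowup (cycleWeight n m)).degree v := by
          rw [degree_cliqueBlowup, hnbr, sum_pair (by simp [Fin.ext_iff])]
          simp [cycleWeight, v, hn, show 0 < n by omega]
          omega
      _ ≤ _ := degree_le_maxDegree _ _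

theorem maxDeg_cycleBlowup {n m : ℕ} (hn : 1 < n) (hm : 1 ≤ m) :
    maxDeg (cycleBlowup n m) = 2 * m := by
  unfold maxDeg
  rw [cycleBlowup_eq (by omega)]
  convert maxDegree_cliqueBlowup_cycleWeight hn hm

theorem chromaticNumber_cycleBlowup {n m : ℕ} (hn : 1 < n) :
    (cycleBlowup n m).chromaticNumber = (m + 2 : ℕ∞) := by
  rw [cycleBlowup_eq (by omega), show (m + 2 : ℕ∞) = ((m + 1 : ℕ) : ℕ∞) + 1 by push_cast; ring,
    chromaticNumber_eq_iff_colorable_not_colorable]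
  refine ⟨colorable_cliqueBlowup_cycleWeight (by omega) m, fun hcol => ?_⟩
  have hcard := hcol.card_le_mul_indepNum
  have hind := indepNum_cliqueBlowup_le (H := cycleGraph (2 * n + 1)) (w := cycleWeight n m)
  have hcyc := two_mul_indepNum_cycleGraph_le (k := 2 * n + 1) (by omega)
  rw [card_sigma_cycleWeight] at hcard
  have := Nat.mul_le_mul_left (m + 1) (hind.trans (by omega : _ ≤ n))
  nlinarith

theorem stmt_6 (n m : ℕ) (hn : 1 < n) (hm : 1 ≤ m) :
    _root_.Free claw (cycleBlowup n m) ∧ _root_.Free kkJoin (cycleBlowup n m) ∧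
    (cycleBlowup n m).cliqueNum = m + 1 ∧
    maxDeg (cycleBlowup n m) = 2 * m ∧
    maxDeg (cycleBlowup n m) = 2 * (cycleBlowup n m).cliqueNum - 2 ∧
    (cycleBlowup n m).chromaticNumber = (m + 2 : ℕ∞) ∧
    (cycleBlowup n m).chromaticNumber = ((cycleBlowup n m).cliqueNum : ℕ∞) + 1 := by
  have hω := cliqueNum_cycleBlowup hn hm
  have hΔ := maxDeg_cycleBlowup hn hm
  have hχ := chromaticNumber_cycleBlowup (m := m) hn
  refine ⟨free_claw_cycleBlowup (by omega) m, free_kkJoin_cycleBlowup hn m, hω, hΔ, by omega, hχ,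
    ?_⟩
  rw [hχ, hω]
  push_cast
  ring
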